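/- arXiv:1711.01397 — 3 statements merged into one kernel-verified Lean document; each statement's English description precedes it below -/
import Mathlib

section
/- Let V be a finite-dimensional complex vector space, W a subspace, and A, B ∈ Hom(W,V) both nonzero with Ker(A) ≠ Ker(B). If for every x ∈ W with x ∉ Ker(A) ∪ Ker(B) the vectors Ax and Bx span the same line, then W = Ker(A) + Ker(B), Im(A) = Im(B), and rank(A) = rank(B) = 1. -/
lemma aux_not_le {V : Type*} [AddCommGroup V] [Module ℂ V]
    (W : Submodule ℂ V) (A B : W →ₗ[ℂ] V) (hB : B ≠ 0)
    (hker : LinearMap.ker A ≠ LinearMap.ker B)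
    (hprop : ∀ x : W, x ∉ LinearMap.ker A → x ∉ LinearMap.ker B →
      ∃ c : ℂ, c ≠ 0 ∧ B x = c • A x) :
    ¬ (LinearMap.ker A ≤ LinearMap.ker B) := by
  intro hle
  obtain ⟨y, hy⟩ : ∃ y, B y ≠ 0 := by
    by_contra h; push_neg at h; exact hB (LinearMap.ext fun z => h z)
  have hyB : y ∉ LinearMap.ker B := by simpa [LinearMap.mem_ker] using hy
  have hyA : y ∉ LinearMap.ker A := fun h => hyB (hle h)
  obtain ⟨x, hxB, hxA⟩ : ∃ x, x ∈ LinearMap.ker B ∧ x ∉ LinearMap.ker A := by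
    by_contra h; push_neg at h
    exact hker (le_antisymm hle fun z hz => by
      by_contra hzA; exact hzA ((h z hz)))
  have hAx : A x ≠ 0 := by simpa [LinearMap.mem_ker] using hxA
  have hBx : B x = 0 := LinearMap.mem_ker.mp hxB
  obtain ⟨c, hc, hcy⟩ := hprop y hyA hyB
  have hxyB : x + y ∉ LinearMap.ker B := by
    simp [LinearMap.mem_ker, hBx, hy]
  have hxyA : x + y ∉ LinearMap.ker A := fun h => hxyB (hle h)
  obtain ⟨c₁, hc₁, hcxy⟩ := hprop (x + y) hxyA hxyB
  rw [map_add, hBx, zero_add, hcy, map_add, smul_add] at hcxy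
  -- hcxy : c • A y = c₁ • A x + c₁ • A y
  have key : A x = (c₁⁻¹ * (c - c₁)) • A y := by
    have h1 : c₁ • A x = (c - c₁) • A y := by
      rw [sub_smul]
      linear_combination (norm := module) - hcxy
    rw [mul_smul, ← h1, inv_smul_smul₀ hc₁]
  have hl : (c₁⁻¹ * (c - c₁)) ≠ 0 := by
    intro h0; rw [h0, zero_smul] at key; exact hAx key
  have hmem : x - (c₁⁻¹ * (c - c₁)) • y ∈ LinearMap.ker A := by
    rw [LinearMap.mem_ker, map_sub, map_smul, key, sub_self]
  have := hle hmem
  rw [LinearMap.mem_ker, map_sub, map_smul, hBx, zero_sub, neg_eq_zero,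
    smul_eq_zero] at this
  rcases this with h | h
  · exact hl h
  · exact hy h

theorem stmt1 {V : Type*} [AddCommGroup V] [Module ℂ V] [FiniteDimensional ℂ V]
    (W : Submodule ℂ V) (A B : W →ₗ[ℂ] V) (hA : A ≠ 0) (hB : B ≠ 0)
    (hker : LinearMap.ker A ≠ LinearMap.ker B)
    (hprop : ∀ x : W, x ∉ LinearMap.ker A → x ∉ LinearMap.ker B →
      ∃ c : ℂ, c ≠ 0 ∧ B x = c • A x) :
    LinearMap.ker A ⊔ LinearMap.ker B = ⊤ ∧
    LinearMap.range A = LinearMap.range B ∧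
    Module.finrank ℂ (LinearMap.range A) = 1 ∧
    Module.finrank ℂ (LinearMap.range B) = 1 := by
  have hprop' : ∀ x : W, x ∉ LinearMap.ker B → x ∉ LinearMap.ker A →
      ∃ c : ℂ, c ≠ 0 ∧ A x = c • B x := by
    intro x hxB hxA
    obtain ⟨c, hc, h⟩ := hprop x hxA hxB
    exact ⟨c⁻¹, inv_ne_zero hc, by rw [h, inv_smul_smul₀ hc]⟩
  have notAB := aux_not_le W A B hB hker hprop
  have notBA := aux_not_le W B A hA hker.symm hprop'
  obtain ⟨u, huA, huB⟩ : ∃ u, u ∈ LinearMap.ker A ∧ u ∉ LinearMap.ker B := by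
    by_contra h; push_neg at h; exact notAB h
  obtain ⟨v, hvB, hvA⟩ : ∃ v, v ∈ LinearMap.ker B ∧ v ∉ LinearMap.ker A := by
    by_contra h; push_neg at h; exact notBA h
  have hAu : A u = 0 := LinearMap.mem_ker.mp huA
  have hBv : B v = 0 := LinearMap.mem_ker.mp hvB
  have hBu : B u ≠ 0 := fun h => huB (LinearMap.mem_ker.mpr h)
  have hAv : A v ≠ 0 := fun h => hvA (LinearMap.mem_ker.mpr h)
  -- key A : every A x lies on the line spanned by B u
  have keyA : ∀ x : W, x ∉ LinearMap.ker A → ∃ a : ℂ, a ≠ 0 ∧ A x = a • B u := by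
    intro x hxA
    have hAx : A x ≠ 0 := fun h => hxA (LinearMap.mem_ker.mpr h)
    by_cases hxB : x ∈ LinearMap.ker B
    · have hzA : x + u ∉ LinearMap.ker A := by
        rw [LinearMap.mem_ker, map_add, hAu, add_zero]; exact hxA
      have hzB : x + u ∉ LinearMap.ker B := by
        rw [LinearMap.mem_ker, map_add, LinearMap.mem_ker.mp hxB, zero_add]
        exact hBu
      obtain ⟨c, hc, h⟩ := hprop (x + u) hzA hzB
      rw [map_add, LinearMap.mem_ker.mp hxB, zero_add, map_add, hAu, add_zero] at h
      exact ⟨c⁻¹, inv_ne_zero hc, by rw [h, inv_smul_smul₀ hc]⟩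
    · obtain ⟨c, hc, hcx⟩ := hprop x hxA hxB
      obtain ⟨t, ht0, htB⟩ : ∃ t : ℂ, t ≠ 0 ∧ B x + t • B u ≠ 0 := by
        by_cases h1 : B x + B u = 0
        · refine ⟨2, two_ne_zero, ?_⟩
          have : B x = -B u := by linear_combination (norm := module) h1
          rw [this]
          intro h2
          apply hBu
          have : B u = 0 := by linear_combination (norm := module) h2
          exact this
        · exact ⟨1, one_ne_zero, by simpa using h1⟩
      have hzA : x + t • u ∉ LinearMap.ker A := by
        rw [LinearMap.mem_ker, map_add, map_smul, hAu, smul_zero, add_zero]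
        exact fun h => hxA (LinearMap.mem_ker.mpr h)
      have hzB : x + t • u ∉ LinearMap.ker B := by
        rw [LinearMap.mem_ker, map_add, map_smul]; exact htB
      obtain ⟨c', hc', h⟩ := hprop (x + t • u) hzA hzB
      rw [map_add, map_smul, map_add, map_smul, hAu, smul_zero, add_zero, hcx] at h
      -- h : c • A x + t • B u = c' • A x
      have hdiff : t • B u = (c' - c) • A x := by
        rw [sub_smul]; linear_combination (norm := module) h
      have hcc : c' - c ≠ 0 := by
        intro h0; rw [h0, zero_smul, smul_eq_zero] at hdiff
        rcases hdiff with h | h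
        · exact ht0 h
        · exact hBu h
      refine ⟨(c' - c)⁻¹ * t, mul_ne_zero (inv_ne_zero hcc) ht0, ?_⟩
      rw [mul_smul, hdiff, inv_smul_smul₀ hcc]
  have keyB : ∀ x : W, x ∉ LinearMap.ker B → ∃ b : ℂ, b ≠ 0 ∧ B x = b • B u := by
    intro x hxB
    have hBx : B x ≠ 0 := fun h => hxB (LinearMap.mem_ker.mpr h)
    obtain ⟨a, ha, hav⟩ := keyA v hvA
    by_cases hxA : x ∈ LinearMap.ker A
    · have hzA : x + v ∉ LinearMap.ker A := by
        rw [LinearMap.mem_ker, map_add, LinearMap.mem_ker.mp hxA, zero_add]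
        exact hAv
      have hzB : x + v ∉ LinearMap.ker B := by
        rw [LinearMap.mem_ker, map_add, hBv, add_zero]; exact hBx
      obtain ⟨c, hc, h⟩ := hprop (x + v) hzA hzB
      rw [map_add, hBv, add_zero, map_add, LinearMap.mem_ker.mp hxA, zero_add, hav] at h
      exact ⟨c * a, mul_ne_zero hc ha, by rw [h, mul_smul]⟩
    · obtain ⟨c, hc, hcx⟩ := hprop x hxA hxB
      obtain ⟨a', ha', hax⟩ := keyA x hxA
      exact ⟨c * a', mul_ne_zero hc ha', by rw [hcx, hax, mul_smul]⟩
  -- range A = span {B u}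
  have rangeA : LinearMap.range A = Submodule.span ℂ {B u} := by
    apply le_antisymm
    · rintro _ ⟨x, rfl⟩
      by_cases hxA : x ∈ LinearMap.ker A
      · rw [LinearMap.mem_ker.mp hxA]; exact Submodule.zero_mem _
      · obtain ⟨a, _, h⟩ := keyA x hxA
        rw [h]; exact Submodule.smul_mem _ _ (Submodule.mem_span_singleton_self _)
    · rw [Submodule.span_singleton_le_iff_mem]
      obtain ⟨a, ha, hav⟩ := keyA v hvA
      exact ⟨a⁻¹ • v, by rw [map_smul, hav, inv_smul_smul₀ ha]⟩
  have rangeB : LinearMap.range B = Submodule.span ℂ {B u} := by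
    apply le_antisymm
    · rintro _ ⟨x, rfl⟩
      by_cases hxB : x ∈ LinearMap.ker B
      · rw [LinearMap.mem_ker.mp hxB]; exact Submodule.zero_mem _
      · obtain ⟨b, _, h⟩ := keyB x hxB
        rw [h]; exact Submodule.smul_mem _ _ (Submodule.mem_span_singleton_self _)
    · rw [Submodule.span_singleton_le_iff_mem]
      exact ⟨u, rfl⟩
  refine ⟨?_, by rw [rangeA, rangeB], by rw [rangeA]; exact finrank_span_singleton hBu,
    by rw [rangeB]; exact finrank_span_singleton hBu⟩
  rw [eq_top_iff]
  rintro x -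
  by_cases hxA : x ∈ LinearMap.ker A
  · exact Submodule.mem_sup_left hxA
  by_cases hxB : x ∈ LinearMap.ker B
  · exact Submodule.mem_sup_right hxB
  obtain ⟨a, ha, hax⟩ := keyA x hxA
  obtain ⟨a', ha', hav⟩ := keyA v hvA
  have h1 : x - (a / a') • v ∈ LinearMap.ker A := by
    rw [LinearMap.mem_ker, map_sub, map_smul, hax, hav, smul_smul,
      div_mul_cancel₀ _ ha', sub_self]
  have h2 : (a / a') • v ∈ LinearMap.ker B :=
    Submodule.smul_mem _ _ hvB
  have : x = (x - (a / a') • v) + (a / a') • v := by ring_nf; abel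
  rw [this]
  exact Submodule.add_mem_sup h1 h2
end

section
/- Let 𝒜 = (A₀,…,A_{l-1}) and ℬ = (B₀,…,B_{m-1}) be sequences of endomorphisms of V each with trivial common kernel, and let k = lj+i−1. Then the partial common kernel of the product sequence satisfies K(𝒜ℬ)_{lj+i-1} = (⋂_{k=0}^{j-1} Ker(B_k)) ∩ (⋂_{k=0}^{i-1} Ker(A_k B_j)). -/
/-- The product of sequences of endomorphisms (first sequence of length `l`):
the entry at index `l*j + i` is `Aᵢ ∘ Bⱼ`. -/
def seqMul {K V : Type*} [Field K] [AddCommGroup V] [Module K V]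
    (l : ℕ) (f g : ℕ → Module.End K V) : ℕ → Module.End K V :=
  fun k => f (k % l) * g (k / l)

/-- `K(𝒜ℬ)_{l*j+i-1} = (⋂_{k<j} Ker B_k) ∩ (⋂_{k<i} Ker (A_k B_j))`, where
`K(𝒞)_r = ⋂_{s ≤ r} Ker C_s` (so the left side is the common kernel of the
first `l*j + i` entries of the product sequence). -/
theorem stmt5 {K V : Type*} [Field K] [AddCommGroup V] [Module K V]
    (l m : ℕ) (hl : 0 < l) (hm : 0 < m) (f g : ℕ → Module.End K V)
    (hf : ⨅ k : Fin l, LinearMap.ker (f k) = ⊥)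
    (hg : ⨅ k : Fin m, LinearMap.ker (g k) = ⊥)
    (i j : ℕ) (hi : i ≤ l) (hj : j < m) :
    ⨅ k : Fin (l * j + i), LinearMap.ker (seqMul l f g k) =
      (⨅ k : Fin j, LinearMap.ker (g k)) ⊓
        (⨅ k : Fin i, LinearMap.ker (f k * g j)) := by
  ext x
  simp only [Submodule.mem_iInf, Submodule.mem_inf, LinearMap.mem_ker, seqMul,
    Module.End.mul_apply]
  constructor
  · intro h
    constructor
    · intro k
      -- show g k x = 0 using hf
      have hk : ∀ r : Fin l, f r (g k x) = 0 := by
        intro r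
        have hlt : l * (k : ℕ) + (r : ℕ) < l * j + i := by
          have : l * (k : ℕ) + (r : ℕ) < l * ((k : ℕ) + 1) := by
            rw [Nat.mul_succ]; omega
          have h2 : l * ((k : ℕ) + 1) ≤ l * j := Nat.mul_le_mul_left l k.2
          omega
        have := h ⟨l * (k : ℕ) + (r : ℕ), hlt⟩
        simpa [Nat.mul_add_mod, Nat.mul_add_div hl, Nat.mod_eq_of_lt r.2,
          Nat.div_eq_of_lt r.2] using this
      have : g k x ∈ (⊥ : Submodule K V) := by
        rw [← hf]
        exact Submodule.mem_iInf _ |>.2 fun r => LinearMap.mem_ker.2 (hk r)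
      simpa using this
    · intro k
      have hlt : l * j + (k : ℕ) < l * j + i := by omega
      have := h ⟨l * j + (k : ℕ), hlt⟩
      have hkl : (k : ℕ) < l := lt_of_lt_of_le k.2 hi
      simpa [Nat.mul_add_mod, Nat.mul_add_div hl, Nat.mod_eq_of_lt hkl,
        Nat.div_eq_of_lt hkl] using this
  · rintro ⟨h1, h2⟩ k
    rcases lt_or_ge ((k : ℕ) / l) j with hq | hq
    · rw [h1 ⟨(k : ℕ) / l, hq⟩, map_zero]
    · -- k/l = j and k % l < i
      have hk := k.2
      have hdiv : (k : ℕ) / l = j := by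
        have : (k : ℕ) / l < j + 1 := by
          apply Nat.div_lt_of_lt_mul
          calc (k : ℕ) < l * j + i := hk
          _ ≤ l * (j + 1) := by rw [Nat.mul_succ]; omega
        omega
      have hmod : (k : ℕ) % l < i := by
        have hdm := Nat.div_add_mod (k : ℕ) l
        rw [hdiv] at hdm
        omega
      rw [hdiv]
      exact h2 ⟨(k : ℕ) % l, hmod⟩
end

section
/- Let V be a finite-dimensional complex vector space, and suppose 𝒜 = (A₀,…,A_{l-1}) and ℬ = (B₀,…,B_{m-1}) are finite sequences in End(V), each with trivial common kernel, such that the product sequence (with entry AᵢBⱼ at index lj+i) reduces, after deleting terms that do not decrease the partial common kernels, to the single-term sequence (id_V). If AᵢBⱼ = id_V is the first nonzero entry of the product (all earlier entries are zero), then Aᵢ, Bⱼ ∈ GL(V) and necessarily i = j = 0; hence A₀, B₀ ∈ GL(V). -/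
/-!
Finite-dimensionality makes `AᵢBⱼ = id` force both factors to be invertible. If `i > 0`, the
earlier entry `A₀Bⱼ` (index `lj`) vanishes, and cancelling the unit `Bⱼ` gives `A₀ = 0`; if
`j > 0`, the earlier entry `AᵢB₀` (index `i`) vanishes, and cancelling `Aᵢ` gives `B₀ = 0`.
-/

section SeqMul

variable {K V : Type*} [Field K] [AddCommGroup V] [Module K V] {l : ℕ} (f g : ℕ → Module.End K V)

theorem seqMul_mul_left (hl : 0 < l) (j : ℕ) : seqMul l f g (l * j) = f 0 * g j := by
  simp only [seqMul, Nat.mul_mod_right, Nat.mul_div_cancel_left _ hl]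

theorem seqMul_of_lt {i : ℕ} (hi : i < l) : seqMul l f g i = f i * g 0 := by
  simp only [seqMul, Nat.mod_eq_of_lt hi, Nat.div_eq_of_lt hi]

end SeqMul

theorem stmt18_general {V : Type*} [AddCommGroup V] [Module ℂ V] [FiniteDimensional ℂ V]
    (l : ℕ) (hl : 0 < l) (f g : ℕ → Module.End ℂ V)
    (hf0 : f 0 ≠ 0) (hg0 : g 0 ≠ 0)
    (i j : ℕ) (hi : i < l)
    (hid : f i * g j = 1)
    (hfirst : ∀ k < l * j + i, seqMul l f g k = 0) :
    IsUnit (f i) ∧ IsUnit (g j) ∧ i = 0 ∧ j = 0 ∧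
      IsUnit (f 0) ∧ IsUnit (g 0) := by
  have hfi : IsUnit (f i) := .of_mul_eq_one _ hid
  have hgj : IsUnit (g j) := .of_mul_eq_one_right _ hid
  have hi0 : i = 0 := by
    by_contra hi0
    refine hf0 (hgj.mul_left_eq_zero.mp ?_)
    rw [← seqMul_mul_left f g hl]
    exact hfirst _ (by omega)
  have hj0 : j = 0 := by
    by_contra hj0
    refine hg0 (hfi.mul_right_eq_zero.mp ?_)
    rw [← seqMul_of_lt f g hi]
    exact hfirst _ (by have := Nat.mul_pos hl (Nat.pos_of_ne_zero hj0); omega)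
  subst hi0 hj0
  exact ⟨hfi, hgj, rfl, rfl, hfi, hgj⟩

/-- If the product sequence of `𝒜` and `ℬ` has `AᵢBⱼ = id` as its first nonzero
entry, then `Aᵢ, Bⱼ ∈ GL(V)` and `i = j = 0`; hence `A₀, B₀ ∈ GL(V)`. -/
theorem stmt18 {V : Type*} [AddCommGroup V] [Module ℂ V] [FiniteDimensional ℂ V]
    (l m : ℕ) (hl : 0 < l) (hm : 0 < m) (f g : ℕ → Module.End ℂ V)
    (hf : ⨅ i : Fin l, LinearMap.ker (f i) = ⊥)
    (hg : ⨅ j : Fin m, LinearMap.ker (g j) = ⊥)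
    (hf0 : f 0 ≠ 0) (hg0 : g 0 ≠ 0)
    (i j : ℕ) (hi : i < l) (hj : j < m)
    (hid : f i * g j = 1)
    (hfirst : ∀ k < l * j + i, seqMul l f g k = 0) :
    IsUnit (f i) ∧ IsUnit (g j) ∧ i = 0 ∧ j = 0 ∧
      IsUnit (f 0) ∧ IsUnit (g 0) :=
  stmt18_general l hl f g hf0 hg0 i j hi hid hfirst
end
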